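/- Let ψ : S(n) → GL(V) be an irreducible unitary representation with character χ^ψ and dimension d_ψ, and let the restriction of ψ to S(n-1) decompose with an irreducible component φ^α of dimension d_α and character χ^α. Then the operator Σ_{a=1}^{n-1} ψ((a,n)), projected to the φ^α-isotypic block of the restriction, acts as the scalar [n(n-1)/2 · χ^ψ((1,2))/d_ψ − (n-1)(n-2)/2 · χ^α((1,2))/d_α] times the identity on that block. -/

import Mathlib

open Equiv Matrix Finset

/-!
Summing `ψ` over all ordered pairs of distinct points gives twice the class sum of the
transpositions, which commutes with `ψ`; by Schur's lemma it is a scalar, and taking traces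
identifies the scalar as `n(n-1) χ^ψ((1,2)) / d_ψ`. The same sum over pairs of points of
`{1, …, n-1}` is the scalar `(n-1)(n-2) χ^α((1,2)) / d_α` for `φ`, and `U` intertwines the
corresponding sum for `ψ` with it. The pairs containing `n` contribute `2 Σ_a ψ((a,n))`, so
compressing by `P = U Uᴴ` leaves half the difference of the two scalars.
-/

theorem Equiv.Perm.exists_map_pair_of_ne {α : Type*} [DecidableEq α] {a b c d : α}
    (hab : a ≠ b) (hcd : c ≠ d) :
    ∃ σ : Perm α, σ c = a ∧ σ d = b ∧
      ∀ x, x ≠ a → x ≠ b → x ≠ c → x ≠ d → σ x = x := by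
  set e := swap c a d with he
  have hea : e ≠ a := by
    intro h
    exact hcd ((swap c a).injective (by rw [← he, h, swap_apply_left])).symm
  refine ⟨swap e b * swap c a, ?_, ?_, fun x hxa hxb hxc hxd => ?_⟩
  · rw [Perm.mul_apply, swap_apply_left, swap_apply_of_ne_of_ne (Ne.symm hea) hab]
  · rw [Perm.mul_apply, ← he, swap_apply_left]
  · have hxe : x ≠ e := by
      rw [he, swap_apply_def]
      split_ifs <;> assumption
    rw [Perm.mul_apply, swap_apply_of_ne_of_ne hxc hxa, swap_apply_of_ne_of_ne hxe hxb]

theorem Finset.card_offDiag_eq_mul_pred {α : Type*} [DecidableEq α] (s : Finset α) :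
    #s.offDiag = #s * (#s - 1) := by
  rw [offDiag_card, Nat.mul_sub_one]

theorem Fin.sum_erase_last {M : Type*} [AddCommMonoid M] {n : ℕ} (f : Fin (n + 1) → M) :
    ∑ a ∈ univ.erase (last n), f a = ∑ a : Fin n, f a.castSucc := by
  rw [show univ.erase (last n) = univ.map castSuccEmb by
    ext a
    simpa using ⟨fun h => ⟨_, castSucc_castPred a h⟩,
      by rintro ⟨b, rfl⟩; exact (castSucc_lt_last b).ne⟩, sum_map]
  rfl

theorem Matrix.trace_conj_of_map_mul_of_mem {G ι R : Type*} [Group G] [Fintype ι]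
    [CommSemiring R] {H : Subgroup G} {ρ : G → Matrix ι ι R}
    (hρ : ∀ g ∈ H, ∀ h ∈ H, ρ (g * h) = ρ g * ρ h)
    {g h : G} (hg : g ∈ H) (hh : h ∈ H) : (ρ (g * h * g⁻¹)).trace = (ρ h).trace := by
  have hg' := H.inv_mem hg
  rw [hρ _ (H.mul_mem hg hh) _ hg', hρ _ hg _ hh, trace_mul_cycle, ← hρ _ hg' _ hg,
    ← hρ _ (H.mul_mem hg' hg) _ hh, inv_mul_cancel, one_mul]

theorem Matrix.eq_trace_div_of_eq_smul_one {ι K : Type*} [Fintype ι] [DecidableEq ι]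
    [Nonempty ι] [Field K] [CharZero K] {T : Matrix ι ι K} {c : K} (h : T = c • 1) :
    c = T.trace / Fintype.card ι := by
  rw [h, trace_smul, trace_one, smul_eq_mul, mul_div_cancel_right₀ _ (by simp)]

theorem Matrix.mul_mul_eq_smul_of_mul_eq_smul {m k R : Type*} [Fintype m] [Fintype k]
    [DecidableEq k] [CommSemiring R] {U : Matrix m k R} {V : Matrix k m R} (hVU : V * U = 1)
    {A : Matrix m m R} {c : R} (hA : A * U = c • U) : U * V * A * (U * V) = c • (U * V) := by
  rw [← Matrix.mul_assoc, Matrix.mul_assoc (U * V) A U, hA, Matrix.mul_smul, Matrix.smul_mul,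
    Matrix.mul_assoc U V U, hVU, Matrix.mul_one]

theorem Matrix.mul_mul_eq_half_sub_smul {m k K : Type*} [Fintype m] [Fintype k]
    [DecidableEq k] [Field K] [NeZero (2 : K)] {U : Matrix m k K} {V : Matrix k m K}
    (hVU : V * U = 1) {A B C : Matrix m m K} (hA : A = B + 2 • C) {a b : K}
    (hAU : A * U = a • U) (hBU : B * U = b • U) :
    U * V * C * (U * V) = ((a - b) / 2) • (U * V) := by
  have hA' := mul_mul_eq_smul_of_mul_eq_smul hVU hAU
  rw [hA, Matrix.mul_add, Matrix.add_mul, mul_mul_eq_smul_of_mul_eq_smul hVU hBU,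
    Matrix.mul_smul, Matrix.smul_mul, ← eq_sub_iff_add_eq', ← sub_smul] at hA'
  rw [div_eq_inv_mul, mul_smul, ← hA', two_nsmul, ← two_smul K, smul_smul,
    inv_mul_cancel₀ two_ne_zero, one_smul]

section TranspositionSum

variable {α M : Type*} [DecidableEq α]

-- Each transposition `(a b)` with `a, b ∈ s` is counted twice, as `(a, b)` and as `(b, a)`.
def transpositionSum [AddCommMonoid M] (ρ : Perm α → M) (s : Finset α) : M :=
  ∑ p ∈ s.offDiag, ρ (swap p.1 p.2)

variable {H : Subgroup (Perm α)} {s : Finset α}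

theorem transpositionSum_insert [AddCommMonoid M] (ρ : Perm α → M) {x : α} (hx : x ∉ s) :
    transpositionSum ρ (insert x s) =
      transpositionSum ρ s + 2 • ∑ a ∈ s, ρ (swap a x) := by
  rw [transpositionSum, offDiag_insert hx, sum_union, sum_union]
  · rw [sum_product, sum_product, sum_singleton, sum_comm, sum_singleton, two_nsmul, ← add_assoc]
    simp only [swap_comm x]
    rfl
  all_goals simp only [disjoint_left]; grind

theorem commute_transpositionSum [Semiring M] {ρ : Perm α → M}
    (hρ : ∀ g ∈ H, ∀ h ∈ H, ρ (g * h) = ρ g * ρ h)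
    (hsH : ∀ a ∈ s, ∀ b ∈ s, swap a b ∈ H) (hHs : ∀ σ ∈ H, ∀ a ∈ s, σ a ∈ s)
    {σ : Perm α} (hσ : σ ∈ H) : Commute (ρ σ) (transpositionSum ρ s) := by
  have key : ∀ p ∈ s.offDiag,
      ρ σ * ρ (swap p.1 p.2) = ρ (swap (σ p.1) (σ p.2)) * ρ σ := by
    intro p hp
    rw [mem_offDiag] at hp
    rw [← hρ _ hσ _ (hsH _ hp.1 _ hp.2.1),
      ← hρ _ (hsH _ (hHs _ hσ _ hp.1) _ (hHs _ hσ _ hp.2.1)) _ hσ, swap_apply_apply,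
      inv_mul_cancel_right]
  rw [Commute, SemiconjBy, transpositionSum, Finset.mul_sum, Finset.sum_mul,
    Finset.sum_congr rfl key]
  refine Finset.sum_nbij' (fun p => (σ p.1, σ p.2)) (fun p => (σ⁻¹ p.1, σ⁻¹ p.2)) ?_ ?_
    (fun p _ => by simp) (fun p _ => by simp) (fun p _ => rfl)
  · intro p hp
    rw [mem_offDiag] at hp ⊢
    exact ⟨hHs _ hσ _ hp.1, hHs _ hσ _ hp.2.1, σ.injective.ne hp.2.2⟩
  · intro p hp
    rw [mem_offDiag] at hp ⊢
    exact ⟨hHs _ (H.inv_mem hσ) _ hp.1, hHs _ (H.inv_mem hσ) _ hp.2.1,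
      σ⁻¹.injective.ne hp.2.2⟩

theorem transpositionSum_mul_eq_mul_transpositionSum {m k R : Type*} [Fintype m] [Fintype k]
    [Semiring R] {ρ : Perm α → Matrix m m R} {ρ' : Perm α → Matrix k k R} {U : Matrix m k R}
    (h : ∀ a ∈ s, ∀ b ∈ s, ρ (swap a b) * U = U * ρ' (swap a b)) :
    transpositionSum ρ s * U = U * transpositionSum ρ' s := by
  simp only [transpositionSum, Matrix.sum_mul, Matrix.mul_sum]
  exact sum_congr rfl fun p hp => h _ (mem_offDiag.1 hp).1 _ (mem_offDiag.1 hp).2.1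

variable {ι K : Type*} [Fintype ι]

theorem trace_transpositionSum [CommSemiring K] {ρ : Perm α → Matrix ι ι K}
    (hρ : ∀ g ∈ H, ∀ h ∈ H, ρ (g * h) = ρ g * ρ h)
    (hsH : ∀ a ∈ s, ∀ b ∈ s, swap a b ∈ H) {a b : α} (ha : a ∈ s) (hb : b ∈ s)
    (htrans : ∀ p ∈ s.offDiag, ∃ σ ∈ H, σ a = p.1 ∧ σ b = p.2) :
    (transpositionSum ρ s).trace = #s.offDiag * (ρ (swap a b)).trace := by
  rw [transpositionSum, trace_sum, ← nsmul_eq_mul, ← sum_const]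
  refine sum_congr rfl fun p hp => ?_
  obtain ⟨σ, hσ, hσa, hσb⟩ := htrans p hp
  rw [← hσa, ← hσb, swap_apply_apply, trace_conj_of_map_mul_of_mem hρ hσ (hsH a ha b hb)]

theorem eq_of_transpositionSum_eq_smul_one [DecidableEq ι] [Nonempty ι] [Field K] [CharZero K]
    {ρ : Perm α → Matrix ι ι K} (hρ : ∀ g ∈ H, ∀ h ∈ H, ρ (g * h) = ρ g * ρ h)
    (hsH : ∀ a ∈ s, ∀ b ∈ s, swap a b ∈ H) {a b : α} (ha : a ∈ s) (hb : b ∈ s)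
    (htrans : ∀ p ∈ s.offDiag, ∃ σ ∈ H, σ a = p.1 ∧ σ b = p.2) {c : K}
    (h : transpositionSum ρ s = c • 1) :
    c = (#s * (#s - 1) : ℕ) * (ρ (swap a b)).trace / Fintype.card ι := by
  rw [eq_trace_div_of_eq_smul_one h, trace_transpositionSum hρ hsH ha hb htrans,
    card_offDiag_eq_mul_pred]

end TranspositionSum

section Stabilizer

variable {α M : Type*} [DecidableEq α] [Fintype α] {x : α}

theorem Equiv.swap_mem_stabilizer_of_mem_erase {a b : α} (ha : a ∈ univ.erase x)
    (hb : b ∈ univ.erase x) : swap a b ∈ MulAction.stabilizer (Perm α) x :=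
  swap_apply_of_ne_of_ne (ne_of_mem_erase ha).symm (ne_of_mem_erase hb).symm

theorem Equiv.Perm.apply_mem_erase_of_mem_stabilizer {σ : Perm α}
    (hσ : σ ∈ MulAction.stabilizer (Perm α) x) {a : α} (ha : a ∈ univ.erase x) :
    σ a ∈ univ.erase x :=
  mem_erase.2 ⟨fun h => ne_of_mem_erase ha (σ.injective (h.trans hσ.symm)), mem_univ _⟩

theorem Equiv.Perm.exists_mem_stabilizer_map_pair {a b : α} (ha : a ∈ univ.erase x)
    (hb : b ∈ univ.erase x) (hab : a ≠ b) :
    ∀ p ∈ (univ.erase x).offDiag,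
      ∃ σ ∈ MulAction.stabilizer (Perm α) x, σ a = p.1 ∧ σ b = p.2 := by
  intro p hp
  rw [mem_offDiag] at hp
  obtain ⟨σ, h0, h1, hfix⟩ := exists_map_pair_of_ne hp.2.2 hab
  exact ⟨σ, hfix x (ne_of_mem_erase hp.1).symm (ne_of_mem_erase hp.2.1).symm
    (ne_of_mem_erase ha).symm (ne_of_mem_erase hb).symm, h0, h1⟩

theorem transpositionSum_univ_eq [AddCommMonoid M] (ρ : Perm α → M) (x : α) :
    transpositionSum ρ univ =
      transpositionSum ρ (univ.erase x) + 2 • ∑ a ∈ univ.erase x, ρ (swap a x) := by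
  rw [← transpositionSum_insert ρ (notMem_erase x univ), insert_erase (mem_univ x)]

theorem commute_transpositionSum_univ [Semiring M] {ρ : Perm α → M}
    (hρ : ∀ g h, ρ (g * h) = ρ g * ρ h) (σ : Perm α) :
    Commute (ρ σ) (transpositionSum ρ univ) :=
  commute_transpositionSum (H := ⊤) (fun g _ h _ => hρ g h)
    (fun _ _ _ _ => Subgroup.mem_top _) (fun _ _ _ _ => mem_univ _) (Subgroup.mem_top σ)

theorem commute_transpositionSum_erase [Semiring M] {ρ : Perm α → M}
    (hρ : ∀ g h, g x = x → h x = x → ρ (g * h) = ρ g * ρ h) {σ : Perm α}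
    (hσ : σ x = x) : Commute (ρ σ) (transpositionSum ρ (univ.erase x)) :=
  commute_transpositionSum (H := MulAction.stabilizer (Perm α) x) (fun g hg h hh => hρ g h hg hh)
    (fun _ ha _ hb => swap_mem_stabilizer_of_mem_erase ha hb)
    (fun _ hσ _ ha => Perm.apply_mem_erase_of_mem_stabilizer hσ ha) hσ

variable {ι K : Type*} [Fintype ι] [DecidableEq ι] [Nonempty ι] [Field K] [CharZero K]

theorem eq_of_transpositionSum_univ_eq_smul_one {ρ : Perm α → Matrix ι ι K}
    (hρ : ∀ g h, ρ (g * h) = ρ g * ρ h) {a b : α} (hab : a ≠ b) {c : K}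
    (h : transpositionSum ρ univ = c • 1) :
    c = (Fintype.card α * (Fintype.card α - 1) : ℕ) * (ρ (swap a b)).trace /
      Fintype.card ι := by
  rw [eq_of_transpositionSum_eq_smul_one (H := ⊤) (fun g _ h _ => hρ g h)
    (fun _ _ _ _ => Subgroup.mem_top _) (mem_univ a) (mem_univ b) (fun p hp => ?_) h, card_univ]
  obtain ⟨σ, ha, hb, -⟩ := Perm.exists_map_pair_of_ne (mem_offDiag.1 hp).2.2 hab
  exact ⟨σ, Subgroup.mem_top σ, ha, hb⟩

theorem eq_of_transpositionSum_erase_eq_smul_one {ρ : Perm α → Matrix ι ι K}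
    (hρ : ∀ g h, g x = x → h x = x → ρ (g * h) = ρ g * ρ h) {a b : α} (ha : a ≠ x)
    (hb : b ≠ x) (hab : a ≠ b) {c : K} (h : transpositionSum ρ (univ.erase x) = c • 1) :
    c = ((Fintype.card α - 1) * (Fintype.card α - 2) : ℕ) * (ρ (swap a b)).trace /
      Fintype.card ι := by
  have ha' : a ∈ univ.erase x := mem_erase.2 ⟨ha, mem_univ a⟩
  have hb' : b ∈ univ.erase x := mem_erase.2 ⟨hb, mem_univ b⟩
  rw [eq_of_transpositionSum_eq_smul_one (H := MulAction.stabilizer (Perm α) x)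
    (fun g hg h hh => hρ g h hg hh) (fun _ ha _ hb => swap_mem_stabilizer_of_mem_erase ha hb)
    ha' hb' (Perm.exists_mem_stabilizer_map_pair ha' hb' hab) h,
    card_erase_of_mem (mem_univ x), card_univ, Nat.sub_sub]

end Stabilizer

theorem stmt4_general (m dψ dα : ℕ) (hdψ : 0 < dψ) (hdα : 0 < dα)
    (ψ : Equiv.Perm (Fin (m + 3)) → Matrix (Fin dψ) (Fin dψ) ℂ)
    (hψmul : ∀ σ τ, ψ (σ * τ) = ψ σ * ψ τ)
    (hψirr : ∀ T : Matrix (Fin dψ) (Fin dψ) ℂ,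
      (∀ σ, T * ψ σ = ψ σ * T) → ∃ c : ℂ, T = c • (1 : Matrix (Fin dψ) (Fin dψ) ℂ))
    (φ : Equiv.Perm (Fin (m + 3)) → Matrix (Fin dα) (Fin dα) ℂ)
    (hφmul : ∀ σ τ, σ (Fin.last (m + 2)) = Fin.last (m + 2) →
      τ (Fin.last (m + 2)) = Fin.last (m + 2) → φ (σ * τ) = φ σ * φ τ)
    (hφirr : ∀ T : Matrix (Fin dα) (Fin dα) ℂ,
      (∀ σ, σ (Fin.last (m + 2)) = Fin.last (m + 2) → T * φ σ = φ σ * T) →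
        ∃ c : ℂ, T = c • (1 : Matrix (Fin dα) (Fin dα) ℂ))
    (U : Matrix (Fin dψ) (Fin dα) ℂ) (hU : Uᴴ * U = 1)
    (P : Matrix (Fin dψ) (Fin dψ) ℂ) (hP : P = U * Uᴴ)
    (hint : ∀ σ, σ (Fin.last (m + 2)) = Fin.last (m + 2) → ψ σ * U = U * φ σ) :
    P * (∑ a : Fin (m + 2), ψ (Equiv.swap a.castSucc (Fin.last (m + 2)))) * P =
      ((((m + 3) * (m + 2) / 2 : ℂ)) * (Matrix.trace (ψ (Equiv.swap 0 1)) / (dψ : ℂ))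
        - (((m + 2) * (m + 1) / 2 : ℂ)) *
            (Matrix.trace (φ (Equiv.swap 0 1)) / (dα : ℂ))) • P := by
  set L := Fin.last (m + 2)
  have : Nonempty (Fin dψ) := ⟨⟨0, hdψ⟩⟩
  have : Nonempty (Fin dα) := ⟨⟨0, hdα⟩⟩
  obtain ⟨cψ, hcψ⟩ := hψirr _ fun σ => (commute_transpositionSum_univ hψmul σ).symm.eq
  obtain ⟨cα, hcα⟩ := hφirr _ fun σ hσ =>
    (commute_transpositionSum_erase hφmul hσ).symm.eq
  have hcψ_eq := eq_of_transpositionSum_univ_eq_smul_one hψmul zero_ne_one hcψ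
  have hcα_eq := eq_of_transpositionSum_erase_eq_smul_one hφmul
    (Fin.ext_iff.not.2 (by simp [L])) (Fin.ext_iff.not.2 (by simp [L])) zero_ne_one hcα
  have hZres : transpositionSum ψ (univ.erase L) * U = cα • U := by
    rw [transpositionSum_mul_eq_mul_transpositionSum fun a ha b hb =>
      hint _ (swap_mem_stabilizer_of_mem_erase ha hb), hcα, Matrix.mul_smul, Matrix.mul_one]
  rw [← Fin.sum_erase_last fun a => ψ (swap a L), hP,
    mul_mul_eq_half_sub_smul hU (transpositionSum_univ_eq ψ L)
      (by rw [hcψ, smul_mul, Matrix.one_mul]) hZres, hcψ_eq, hcα_eq]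
  simp only [Fintype.card_fin]
  congr 1
  push_cast
  ring

/-- Let `ψ` be an irreducible unitary (matrix) representation of `S(n)` (here `n = m+3`,
acting on `Fin (m+3)`, with `S(n-1)` realized as the stabilizer of the last point), with
character `χ^ψ = tr ∘ ψ` and dimension `dψ`.  Let `φ` be an irreducible unitary
representation of the subgroup `S(n-1)` (a function on the ambient group, multiplicative
on elements fixing the last point) of dimension `dα`, and suppose the range of the
projection `P = U Uᴴ` (with `Uᴴ U = 1`) is an `S(n-1)`-invariant subspace on which the
restriction of `ψ` acts as `φ` (the `φ`-isotypic block, multiplicity-free by branching).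
Then `P (Σ_{a=1}^{n-1} ψ((a,n))) P` equals the scalar
`n(n-1)/2 · χ^ψ((1,2))/dψ − (n-1)(n-2)/2 · χ^φ((1,2))/dα` times `P`. -/
theorem stmt4 (m dψ dα : ℕ) (hdψ : 0 < dψ) (hdα : 0 < dα)
    (ψ : Equiv.Perm (Fin (m + 3)) → Matrix (Fin dψ) (Fin dψ) ℂ)
    (hψmul : ∀ σ τ, ψ (σ * τ) = ψ σ * ψ τ)
    (hψone : ψ 1 = 1)
    (hψunitary : ∀ σ, (ψ σ)ᴴ * ψ σ = 1)
    (hψirr : ∀ T : Matrix (Fin dψ) (Fin dψ) ℂ,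
      (∀ σ, T * ψ σ = ψ σ * T) → ∃ c : ℂ, T = c • (1 : Matrix (Fin dψ) (Fin dψ) ℂ))
    (φ : Equiv.Perm (Fin (m + 3)) → Matrix (Fin dα) (Fin dα) ℂ)
    (hφmul : ∀ σ τ, σ (Fin.last (m + 2)) = Fin.last (m + 2) →
      τ (Fin.last (m + 2)) = Fin.last (m + 2) → φ (σ * τ) = φ σ * φ τ)
    (hφone : φ 1 = 1)
    (hφunitary : ∀ σ, σ (Fin.last (m + 2)) = Fin.last (m + 2) → (φ σ)ᴴ * φ σ = 1)
    (hφirr : ∀ T : Matrix (Fin dα) (Fin dα) ℂ,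
      (∀ σ, σ (Fin.last (m + 2)) = Fin.last (m + 2) → T * φ σ = φ σ * T) →
        ∃ c : ℂ, T = c • (1 : Matrix (Fin dα) (Fin dα) ℂ))
    (U : Matrix (Fin dψ) (Fin dα) ℂ) (hU : Uᴴ * U = 1)
    (P : Matrix (Fin dψ) (Fin dψ) ℂ) (hP : P = U * Uᴴ)
    (hint : ∀ σ, σ (Fin.last (m + 2)) = Fin.last (m + 2) → ψ σ * U = U * φ σ) :
    P * (∑ a : Fin (m + 2), ψ (Equiv.swap a.castSucc (Fin.last (m + 2)))) * P =
      ((((m + 3) * (m + 2) / 2 : ℂ)) * (Matrix.trace (ψ (Equiv.swap 0 1)) / (dψ : ℂ))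
        - (((m + 2) * (m + 1) / 2 : ℂ)) *
            (Matrix.trace (φ (Equiv.swap 0 1)) / (dα : ℂ))) • P :=
  stmt4_general m dψ dα hdψ hdα ψ hψmul hψirr φ hφmul hφirr U hU P hP hint
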